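/- Let α ∈ R^+ and consider α-strings of alcoves {α↑^n A : n ∈ ℤ}. If A ∈ 𝒜_α^- (i.e., A = A_x with x ∈ W and A ⊂ H_{α,0}^-), then the intersection of the support {A_x : x ∈ W} of the finite Weyl group orbit with the α-string of A is exactly {A, α↑A}; similarly if A ∈ 𝒜_α^+ it is {α↓A, A}. In particular, each α-string meets {A_x : x ∈ W} in exactly two consecutive alcoves. -/

import Mathlib

open Module

section Preliminaries

variable {V : Type*} [AddCommGroup V] [Module ℚ V]

/-- Data of a reduced irreducible root system `R` in a `ℚ`-vector space `V`,
with positive roots, simple roots, coroots (in the dual space) and highest root. -/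
structure RootSystemData (V : Type*) [AddCommGroup V] [Module ℚ V] where
  R : Set V
  Rpos : Set V
  Δ : Set V
  coroot : V → Module.Dual ℚ V
  highest : V
  finite_R : R.Finite
  nonempty_R : R.Nonempty
  pos_subset : Rpos ⊆ R
  simple_subset : Δ ⊆ Rpos
  coroot_self : ∀ α ∈ R, coroot α α = 2
  neg_mem : ∀ α ∈ R, -α ∈ R
  coroot_neg : ∀ α ∈ R, coroot (-α) = -coroot α
  pos_or_neg : ∀ α ∈ R, (α ∈ Rpos ∧ -α ∉ Rpos) ∨ (-α ∈ Rpos ∧ α ∉ Rpos)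
  reflect_mem : ∀ α ∈ R, ∀ β ∈ R, β - coroot α β • α ∈ R
  coroot_int : ∀ α ∈ R, ∀ β ∈ R, ∃ m : ℤ, coroot α β = (m : ℚ)
  reduced : ∀ α ∈ R, (2 : ℚ) • α ∉ R
  pos_comb : ∀ α ∈ Rpos, α ∈ AddSubmonoid.closure Δ
  simple_indep : LinearIndependent ℚ (fun a : Δ => (a : V))
  irreducible : ∀ Δ₁ Δ₂ : Set V, Δ₁ ∪ Δ₂ = Δ → Δ₁.Nonempty → Δ₂.Nonempty →
    (∀ a ∈ Δ₁, ∀ b ∈ Δ₂, coroot a b = 0) → False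
  highest_mem : highest ∈ Rpos
  highest_prop : ∀ α ∈ Rpos, highest - α ∈ AddSubmonoid.closure Δ

/-- The affine reflection `s_{α,n}` on `V*`: `v ↦ v - (⟨α,v⟩ - n) α^∨`. -/
def sAff (α : V) (cα : Module.Dual ℚ V) (n : ℤ) (v : Module.Dual ℚ V) : Module.Dual ℚ V :=
  v - (v α - n) • cα

/-- Negative half space `H⁻_{α,n}`. -/
def Hm (α : V) (n : ℤ) : Set (Module.Dual ℚ V) := {v | v α < (n : ℚ)}

/-- Positive half space `H⁺_{α,n}`. -/
def Hp (α : V) (n : ℤ) : Set (Module.Dual ℚ V) := {v | (n : ℚ) < v α}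

/-- Hyperplane `H_{α,n}`. -/
def Hyp (α : V) (n : ℤ) : Set (Module.Dual ℚ V) := {v | v α = (n : ℚ)}

/-- Alcoves: nonempty open intersections of strips between consecutive root hyperplanes. -/
def IsAlcove (P : RootSystemData V) (A : Set (Module.Dual ℚ V)) : Prop :=
  A.Nonempty ∧ ∃ d : V → ℤ,
    A = {v | ∀ α ∈ P.Rpos, (d α : ℚ) < v α ∧ v α < (d α : ℚ) + 1}

/-- The minimal `m` with `A ⊆ H⁻_{β,m}`. -/
noncomputable def upIdx (β : V) (A : Set (Module.Dual ℚ V)) : ℤ := sInf {m : ℤ | A ⊆ Hm β m}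

/-- The maximal `m` with `A ⊆ H⁺_{β,m}`. -/
noncomputable def downIdx (β : V) (A : Set (Module.Dual ℚ V)) : ℤ := sSup {m : ℤ | A ⊆ Hp β m}

/-- The operation `β↑` on alcoves. -/
noncomputable def up (P : RootSystemData V) (β : V) (A : Set (Module.Dual ℚ V)) :
    Set (Module.Dual ℚ V) := sAff β (P.coroot β) (upIdx β A) '' A

/-- The operation `β↓` on alcoves. -/
noncomputable def down (P : RootSystemData V) (β : V) (A : Set (Module.Dual ℚ V)) :
    Set (Module.Dual ℚ V) := sAff β (P.coroot β) (downIdx β A) '' A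

/-- Contragredient action of a linear automorphism of `V` on `V*`. -/
def dualAct (w : V ≃ₗ[ℚ] V) (v : Module.Dual ℚ V) : Module.Dual ℚ V :=
  v ∘ₗ (w.symm : V →ₗ[ℚ] V)

/-- Generators of the finite Weyl group: the simple reflections on `V`. -/
def weylGens (P : RootSystemData V) : Set (V ≃ₗ[ℚ] V) :=
  {e | ∃ α ∈ P.Δ, ∀ x, e x = x - P.coroot α x • α}

/-- The finite Weyl group. -/
def Weyl (P : RootSystemData V) : Subgroup (V ≃ₗ[ℚ] V) := Subgroup.closure (weylGens P)

-- `w(β)⁺`: the positive root among `±w(β)`.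
open scoped Classical in
noncomputable def wplus (P : RootSystemData V) (w : V ≃ₗ[ℚ] V) (β : V) : V :=
  if w β ∈ P.Rpos then w β else -(w β)

/-- Generators of the affine Weyl group: the simple affine reflections on `V*`. -/
def affGens (P : RootSystemData V) : Set (Equiv.Perm (Module.Dual ℚ V)) :=
  {e | (∃ α ∈ P.Δ, ∀ v, e v = sAff α (P.coroot α) 0 v) ∨
       (∀ v, e v = sAff P.highest (P.coroot P.highest) 1 v)}

/-- The affine Weyl group, acting on `V*`. -/
def AffWeyl (P : RootSystemData V) : Subgroup (Equiv.Perm (Module.Dual ℚ V)) :=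
  Subgroup.closure (affGens P)

/-- The fundamental alcove `A_e`. -/
def Ae (P : RootSystemData V) : Set (Module.Dual ℚ V) :=
  {v | ∀ α ∈ P.Rpos, 0 < v α ∧ v α < 1}

/-- The alcoves `A_x`, `x ∈ W` (finite Weyl group). -/
def finAlc (P : RootSystemData V) : Set (Set (Module.Dual ℚ V)) :=
  {S | ∃ w ∈ Weyl P, S = dualAct w '' Ae P}

/-- `𝒜⁻_β`: finite-Weyl alcoves contained in `H⁻_{β,0}`. -/
def Aminus (P : RootSystemData V) (β : V) : Set (Set (Module.Dual ℚ V)) :=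
  {S | S ∈ finAlc P ∧ S ⊆ Hm β 0}

end Preliminaries

/-- The `α`-string through an alcove `A`: all `α↑ⁿ A`, `n ∈ ℤ`. -/
def Astring {V : Type*} [AddCommGroup V] [Module ℚ V] (P : RootSystemData V)
    (α : V) (A : Set (Module.Dual ℚ V)) : Set (Set (Module.Dual ℚ V)) :=
  {S | ∃ n : ℕ, S = (up P α)^[n] A ∨ S = (down P α)^[n] A}

/-!
Every alcove `A_w`, `w ∈ W`, lies strictly between `H_{α,-1}` and `H_{α,1}` and off `H_{α,0}`,
because `w⁻¹ α` is a positive or a negative root. The operations `α↑` and `α↓` move an alcove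
one strip `{d < ⟨v, α⟩ < d + 1}` up or down, so along an `α`-string only the alcoves in the
strips `d = -1` and `d = 0` can be of the form `A_w`. These two are exchanged by the reflection
`s_{α,0}`, which sends `A_w` to `A_{s_α w}` as soon as `s_α ∈ W` is known.

That `s_α ∈ W` is proved by induction on the height of `α`: a non-simple positive root pairs
positively with some simple root `a`, and then `s_α = s_a s_{α'} s_a` with `α' = s_a α` positive
of smaller height. Positivity of `⟨a, α^∨⟩` is turned into positivity of `⟨α, a^∨⟩` by the
`W`-invariant form `∑_{β ∈ R} β^∨ ⊗ β^∨`.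
-/

open Pointwise

namespace RootSystemData

variable {V : Type*} [AddCommGroup V] [Module ℚ V] (P : RootSystemData V)

lemma zero_notMem_R : (0 : V) ∉ P.R := fun h => by
  simpa using P.coroot_self 0 h

lemma neg_two_smul_notMem_R {a : V} (ha : a ∈ P.R) : (-2 : ℚ) • a ∉ P.R := by
  rw [neg_smul, ← smul_neg]
  exact P.reduced (-a) (P.neg_mem a ha)

lemma eq_one_or_eq_neg_one_of_smul_mem {a : V} (ha : a ∈ P.R) {t : ℚ} (ht : t • a ∈ P.R) :
    t = 1 ∨ t = -1 := by
  have ht0 : t ≠ 0 := by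
    rintro rfl
    exact P.zero_notMem_R (by simpa using ht)
  obtain ⟨m, hm⟩ := P.coroot_int a ha _ ht
  obtain ⟨l, hl⟩ := P.coroot_int _ ht a ha
  have hm' : (m : ℚ) = 2 * t := by
    rw [← hm, map_smul, P.coroot_self a ha, smul_eq_mul, mul_comm]
  have hl' : t * l = 2 := by
    have h2 := P.coroot_self _ ht
    rwa [map_smul, hl, smul_eq_mul] at h2
  have hml : m * l = 4 := by
    have : (m : ℚ) * l = 4 := by rw [hm']; linear_combination 2 * hl'
    exact_mod_cast this
  have hdvd : m ∣ 4 := ⟨l, hml.symm⟩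
  have hm_le : m ≤ 4 := Int.le_of_dvd (by norm_num) hdvd
  have hm_ge : -4 ≤ m := by
    have := Int.le_of_dvd (by norm_num) (neg_dvd.mpr hdvd); omega
  have smul_t : ∀ s : ℚ, s • t • a = (s * t) • a := fun s => smul_smul s t a
  -- `2t = m` and `m ∣ 4`; reducedness excludes `t = ±2` and `t = ±1/2`.
  interval_cases m <;> push_cast at hm'
  · exact absurd (by convert ht using 2; linarith) (P.neg_two_smul_notMem_R ha)
  · omega
  · right; linarith
  · refine absurd ?_ (P.neg_two_smul_notMem_R ht)
    rw [smul_t, show (-2) * t = 1 by linarith, one_smul]; exact ha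
  · exact absurd (by linarith) ht0
  · refine absurd ?_ (P.reduced _ ht)
    rw [smul_t, show 2 * t = 1 by linarith, one_smul]; exact ha
  · left; linarith
  · omega
  · exact absurd (by convert ht using 2; linarith) (P.reduced a ha)

abbrev reflection {α : V} (hα : α ∈ P.R) : V ≃ₗ[ℚ] V := Module.reflection (P.coroot_self α hα)

lemma reflection_apply {α : V} (hα : α ∈ P.R) (x : V) :
    P.reflection hα x = x - P.coroot α x • α :=
  Module.reflection_apply _ _

lemma reflection_mem {α β : V} (hα : α ∈ P.R) (hβ : β ∈ P.R) : P.reflection hα β ∈ P.R :=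
  P.reflect_mem α hα β hβ

lemma coroot_reflection {α β γ : V} (hα : α ∈ P.R) (hβ : β ∈ P.R) (hγ : γ ∈ P.R) :
    P.coroot β (P.reflection hα γ) = P.coroot (P.reflection hα β) γ := by
  set s := P.reflection hα
  have hsβ : s β ∈ P.R := P.reflection_mem hα hβ
  have hs : ∀ x, s (s x) = x := Module.involutive_reflection _
  -- `β^∨ ∘ s_α` and `(s_α β)^∨` both give reflections in `s_α β` that preserve `R`.
  have key := Module.Dual.eq_of_preReflection_mapsTo' P.finite_R (Submodule.subset_span hsβ)
    (f := P.coroot β ∘ₗ s.toLinearMap) (g := P.coroot (s β))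
    (by simp [hs, P.coroot_self β hβ]) ?_ (P.coroot_self _ hsβ)
    (fun δ hδ => P.reflect_mem _ hsβ δ hδ)
  · exact LinearMap.congr_fun key ⟨γ, Submodule.subset_span hγ⟩
  · intro δ hδ
    have : Module.preReflection (s β) (P.coroot β ∘ₗ s.toLinearMap) δ =
        s (s δ - P.coroot β (s δ) • β) := by
      simp [Module.preReflection_apply, hs]
    rw [this]
    exact P.reflection_mem hα (P.reflect_mem β hβ _ (P.reflection_mem hα hδ))

noncomputable def invForm (x y : V) : ℚ :=
  ∑ β ∈ P.finite_R.toFinset, P.coroot β x * P.coroot β y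

lemma invForm_comm (x y : V) : P.invForm x y = P.invForm y x := by
  simp only [invForm, mul_comm]

lemma invForm_reflection {α x y : V} (hα : α ∈ P.R) (hx : x ∈ P.R) (hy : y ∈ P.R) :
    P.invForm (P.reflection hα x) (P.reflection hα y) = P.invForm x y := by
  have hs : ∀ z, P.reflection hα (P.reflection hα z) = z := Module.involutive_reflection _
  refine Finset.sum_nbij' (P.reflection hα) (P.reflection hα) ?_ ?_ (fun β _ => hs β)
    (fun β _ => hs β) ?_
  · exact fun β hβ => by simpa using P.reflection_mem hα (by simpa using hβ)
  · exact fun β hβ => by simpa using P.reflection_mem hα (by simpa using hβ)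
  · intro β hβ
    rw [Set.Finite.mem_toFinset] at hβ
    rw [P.coroot_reflection hα hβ hx, P.coroot_reflection hα hβ hy]

lemma two_mul_invForm {α y : V} (hα : α ∈ P.R) (hy : y ∈ P.R) :
    2 * P.invForm α y = P.coroot α y * P.invForm α α := by
  have h := P.invForm_reflection hα hα hy
  rw [Module.reflection_apply_self, P.reflection_apply] at h
  have expand : P.invForm (-α) (y - P.coroot α y • α) =
      -P.invForm α y + P.coroot α y * P.invForm α α := by
    simp only [invForm, Finset.mul_sum, ← Finset.sum_neg_distrib, ← Finset.sum_add_distrib,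
      map_neg, map_sub, map_smul, smul_eq_mul]
    exact Finset.sum_congr rfl fun _ _ => by ring
  linarith

lemma invForm_self_pos {α : V} (hα : α ∈ P.R) : 0 < P.invForm α α := by
  have hle := Finset.single_le_sum (f := fun β => P.coroot β α * P.coroot β α)
    (fun β _ => mul_self_nonneg _) (P.finite_R.mem_toFinset.mpr hα)
  simp only [P.coroot_self α hα] at hle
  unfold invForm
  linarith

lemma coroot_pos_comm {α a : V} (hα : α ∈ P.R) (ha : a ∈ P.R) (h : 0 < P.coroot α a) :
    0 < P.coroot a α := by
  have h₁ := P.two_mul_invForm hα ha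
  have h₂ := P.two_mul_invForm ha hα
  have hpos : 0 < P.invForm α a := by nlinarith [P.invForm_self_pos hα]
  rw [P.invForm_comm] at h₂
  nlinarith [P.invForm_self_pos ha]

noncomputable abbrev simpleBasis := Module.Basis.extend P.simple_indep

lemma simpleBasis_simple {c : V} (hc : c ∈ P.Δ) :
    P.simpleBasis ⟨c, LinearIndepOn.subset_extend _ _ hc⟩ = c :=
  Module.Basis.extend_apply_self _ _

open Classical in
lemma simpleBasis_coord_simple (i) {c : V} (hc : c ∈ P.Δ) :
    P.simpleBasis.coord i c = if (i : V) = c then 1 else 0 := by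
  have hbc := P.simpleBasis_simple hc
  rw [← hbc, Module.Basis.coord_apply, Module.Basis.repr_self, Finsupp.single_apply]
  simp only [Subtype.ext_iff, eq_comm, hbc]

lemma simpleBasis_coord_nonneg {x : V} (hx : x ∈ AddSubmonoid.closure P.Δ) (i) :
    0 ≤ P.simpleBasis.coord i x := by
  induction hx using AddSubmonoid.closure_induction with
  | mem c hc => rw [P.simpleBasis_coord_simple i hc]; split_ifs <;> norm_num
  | zero => simp
  | add x y _ _ hx hy => rw [map_add]; exact add_nonneg hx hy

lemma exists_simple_pos_of_mem_closure (f : Module.Dual ℚ V) {x : V}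
    (hx : x ∈ AddSubmonoid.closure P.Δ) (hfx : 0 < f x) : ∃ a ∈ P.Δ, 0 < f a := by
  by_contra! h
  have : f x ≤ 0 := by
    clear hfx
    induction hx using AddSubmonoid.closure_induction with
    | mem c hc => exact h c hc
    | zero => simp
    | add x y _ _ hx hy => rw [map_add]; exact add_nonpos hx hy
  linarith

lemma eq_smul_of_add_eq_smul {a x y : V} (ha : a ∈ P.Δ) (hx : x ∈ AddSubmonoid.closure P.Δ)
    (hy : y ∈ AddSubmonoid.closure P.Δ) {c : ℚ} (hxy : x + y = c • a) :
    ∃ t : ℚ, x = t • a := by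
  set b := P.simpleBasis
  refine ⟨b.coord ⟨a, LinearIndepOn.subset_extend _ _ ha⟩ x, b.ext_elem fun i => ?_⟩
  have hsum := congrArg (b.coord i) hxy
  rw [map_add, map_smul, P.simpleBasis_coord_simple i ha] at hsum
  change b.coord i x = b.coord i (_ • a)
  rw [map_smul, P.simpleBasis_coord_simple i ha, smul_eq_mul]
  split_ifs at hsum ⊢ with hi
  · rw [show i = ⟨a, _⟩ from Subtype.ext hi, mul_one]
  · have := P.simpleBasis_coord_nonneg hx i
    have := P.simpleBasis_coord_nonneg hy i
    simp only [smul_zero] at hsum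
    linarith

lemma mem_R_of_mem_Δ {a : V} (ha : a ∈ P.Δ) : a ∈ P.R :=
  P.pos_subset (P.simple_subset ha)

lemma reflection_mem_Rpos {a β : V} (ha : a ∈ P.Δ) (hβ : β ∈ P.Rpos) (hβa : β ≠ a) :
    P.reflection (P.mem_R_of_mem_Δ ha) β ∈ P.Rpos := by
  have haR := P.mem_R_of_mem_Δ ha
  have hβR := P.pos_subset hβ
  by_contra hneg
  have hneg' : -(P.reflection haR β) ∈ P.Rpos := by
    rcases P.pos_or_neg _ (P.reflection_mem haR hβR) with h | h
    · exact absurd h.1 hneg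
    · exact h.1
  obtain ⟨t, rfl⟩ := P.eq_smul_of_add_eq_smul ha (P.pos_comb β hβ) (P.pos_comb _ hneg')
    (c := P.coroot a β) (by rw [P.reflection_apply]; abel)
  rcases P.eq_one_or_eq_neg_one_of_smul_mem haR hβR with rfl | rfl
  · exact hβa (one_smul ℚ a)
  · rcases P.pos_or_neg a haR with h | h
    · exact h.2 (by simpa using hβ)
    · exact h.2 (P.simple_subset ha)

open Classical in
noncomputable def height : V →ₗ[ℚ] ℚ :=
  P.simpleBasis.constr ℚ fun i => if (i : V) ∈ P.Δ then 1 else 0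

lemma height_simple {a : V} (ha : a ∈ P.Δ) : P.height a = 1 := by
  rw [height, ← P.simpleBasis_simple ha, Module.Basis.constr_basis]
  simp [ha]

lemma exists_height_eq_natCast {x : V} (hx : x ∈ AddSubmonoid.closure P.Δ) :
    ∃ n : ℕ, P.height x = n ∧ (n = 0 → x = 0) := by
  induction hx using AddSubmonoid.closure_induction with
  | mem c hc => exact ⟨1, by simp [P.height_simple hc], by simp⟩
  | zero => exact ⟨0, by simp, fun _ => rfl⟩
  | add x y _ _ hx hy =>
    obtain ⟨m, hm, hm0⟩ := hx
    obtain ⟨n, hn, hn0⟩ := hy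
    refine ⟨m + n, by push_cast [map_add, hm, hn]; rfl, fun h => ?_⟩
    rw [hm0 (by omega), hn0 (by omega), add_zero]

lemma exists_height_eq_pos {β : V} (hβ : β ∈ P.Rpos) : ∃ n : ℕ, 0 < n ∧ P.height β = n := by
  obtain ⟨n, hn, hn0⟩ := P.exists_height_eq_natCast (P.pos_comb β hβ)
  refine ⟨n, Nat.pos_of_ne_zero fun h => ?_, hn⟩
  exact P.zero_notMem_R (hn0 h ▸ P.pos_subset hβ)

lemma reflection_mem_Weyl {a : V} (ha : a ∈ P.Δ) : P.reflection (P.mem_R_of_mem_Δ ha) ∈ Weyl P :=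
  Subgroup.subset_closure ⟨a, ha, P.reflection_apply _⟩

lemma Weyl_le_stabilizer : Weyl P ≤ MulAction.stabilizer (V ≃ₗ[ℚ] V) P.R := by
  refine (Subgroup.closure_le _).mpr ?_
  rintro e ⟨a, ha, he⟩
  obtain rfl : e = P.reflection (P.mem_R_of_mem_Δ ha) :=
    LinearEquiv.ext fun x => by rw [he, P.reflection_apply]
  rw [SetLike.mem_coe, MulAction.mem_stabilizer_iff, ← Set.image_smul]
  have haR := P.mem_R_of_mem_Δ ha
  exact (Module.bijOn_reflection_of_mapsTo _ fun β hβ => P.reflection_mem haR hβ).image_eq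

lemma Weyl_apply_mem {w : V ≃ₗ[ℚ] V} (hw : w ∈ Weyl P) {β : V} (hβ : β ∈ P.R) : w β ∈ P.R := by
  have h : w • P.R = P.R := P.Weyl_le_stabilizer hw
  exact h ▸ Set.smul_mem_smul_set hβ

lemma Weyl_symm_apply_mem {w : V ≃ₗ[ℚ] V} (hw : w ∈ Weyl P) {β : V} (hβ : β ∈ P.R) :
    w.symm β ∈ P.R :=
  P.Weyl_apply_mem (inv_mem hw) hβ

lemma exists_mem_Weyl_eq_reflection {α : V} (hα : α ∈ P.Rpos) :
    ∃ u ∈ Weyl P, ∀ β ∈ P.R, u β = P.reflection (P.pos_subset hα) β := by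
  obtain ⟨n, -, hn⟩ := P.exists_height_eq_pos hα
  induction n using Nat.strong_induction_on generalizing α with
  | _ n ih =>
  have hαR := P.pos_subset hα
  by_cases hΔ : α ∈ P.Δ
  · exact ⟨_, P.reflection_mem_Weyl hΔ, fun β _ => rfl⟩
  obtain ⟨a, ha, hαa⟩ := P.exists_simple_pos_of_mem_closure (P.coroot α) (P.pos_comb α hα)
    (by rw [P.coroot_self α hαR]; norm_num)
  have haR := P.mem_R_of_mem_Δ ha
  have hs : ∀ z, P.reflection haR (P.reflection haR z) = z := Module.involutive_reflection _
  set α' := P.reflection haR α with hα'_def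
  have hα' : α' ∈ P.Rpos := P.reflection_mem_Rpos ha hα (by rintro rfl; exact hΔ ha)
  obtain ⟨m, -, hm⟩ := P.exists_height_eq_pos hα'
  obtain ⟨k, hk⟩ := P.coroot_int a haR α hαR
  have hk_pos : 0 < k := by exact_mod_cast hk ▸ P.coroot_pos_comm hαR haR hαa
  have hmn : (m : ℤ) = n - k := by
    have : (m : ℚ) = n - k := by
      rw [← hm, ← hn, hα'_def, P.reflection_apply, map_sub, map_smul, P.height_simple ha, hk,
        smul_eq_mul, mul_one]
    exact_mod_cast this
  obtain ⟨u, hu, hu_eq⟩ := ih m (by omega) hα' hm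
  -- `s_α = s_a s_{α'} s_a`, and `α'` has smaller height than `α`.
  have hsa := P.reflection_mem_Weyl ha
  refine ⟨P.reflection haR * u * P.reflection haR, mul_mem (mul_mem hsa hu) hsa, fun β hβ => ?_⟩
  have hsα' : P.reflection haR α' = α := hs α
  rw [LinearEquiv.mul_apply, LinearEquiv.mul_apply, hu_eq _ (P.reflection_mem haR hβ),
    P.reflection_apply _ (P.reflection haR β), map_sub, map_smul, hs, hsα',
    P.coroot_reflection haR (P.pos_subset hα') hβ, hsα', P.reflection_apply]

end RootSystemData

section Alcoves

variable {V : Type*} [AddCommGroup V] [Module ℚ V] (P : RootSystemData V)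

lemma mem_dualAct_image_Ae_iff {w : V ≃ₗ[ℚ] V} {v : Module.Dual ℚ V} :
    v ∈ dualAct w '' Ae P ↔ ∀ γ ∈ P.Rpos, 0 < v (w γ) ∧ v (w γ) < 1 := by
  have hinv : Function.LeftInverse (dualAct w.symm) (dualAct w) := fun u => by
    ext x; simp [dualAct]
  have hinv' : Function.RightInverse (dualAct w.symm) (dualAct w) := fun u => by
    ext x; simp [dualAct]
  rw [Set.image_eq_preimage_of_inverse hinv hinv']
  simp [Ae, dualAct]

lemma Ae_nonempty : (Ae P).Nonempty := by
  obtain ⟨M, hM⟩ := ((P.finite_R.subset P.pos_subset).image P.height).bddAbove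
  refine ⟨(|M| + 1)⁻¹ • P.height, fun γ hγ => ?_⟩
  obtain ⟨n, hn, hγn⟩ := P.exists_height_eq_pos hγ
  have h₁ : (1 : ℚ) ≤ P.height γ := by rw [hγn]; exact_mod_cast hn
  have h₂ : P.height γ ≤ M := hM ⟨γ, hγ, rfl⟩
  have hM : 0 < |M| + 1 := by positivity
  rw [LinearMap.smul_apply, smul_eq_mul, inv_mul_eq_div, lt_div_iff₀ hM, div_lt_one hM]
  constructor <;> linarith [le_abs_self M]

def InStrip (α : V) (d : ℤ) (S : Set (Module.Dual ℚ V)) : Prop :=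
  S.Nonempty ∧ ∀ v ∈ S, (d : ℚ) < v α ∧ v α < d + 1

lemma InStrip.eq {α : V} {d e : ℤ} {S : Set (Module.Dual ℚ V)} (hd : InStrip α d S)
    (he : InStrip α e S) : d = e := by
  obtain ⟨v, hv⟩ := hd.1
  have h₁ := hd.2 v hv
  have h₂ := he.2 v hv
  have : d < e + 1 := by exact_mod_cast h₁.1.trans h₂.2
  have : e < d + 1 := by exact_mod_cast h₂.1.trans h₁.2
  omega

variable {P}

lemma sAff_apply_root {α : V} (hα : α ∈ P.R) (n : ℤ) (v : Module.Dual ℚ V) :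
    sAff α (P.coroot α) n v α = 2 * n - v α := by
  simp only [sAff, LinearMap.sub_apply, LinearMap.smul_apply, smul_eq_mul, P.coroot_self α hα]
  ring

lemma sAff_sAff {α : V} (hα : α ∈ P.R) (n : ℤ) (v : Module.Dual ℚ V) :
    sAff α (P.coroot α) n (sAff α (P.coroot α) n v) = v := by
  rw [sAff, sAff_apply_root hα, sAff]
  module

lemma inStrip_image_sAff {α : V} (hα : α ∈ P.R) {d : ℤ} {S : Set (Module.Dual ℚ V)}
    (hS : InStrip α d S) (n : ℤ) : InStrip α (2 * n - d - 1) (sAff α (P.coroot α) n '' S) := by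
  refine ⟨hS.1.image _, ?_⟩
  rintro _ ⟨v, hv, rfl⟩
  have := hS.2 v hv
  rw [sAff_apply_root hα]
  push_cast
  constructor <;> linarith

lemma upIdx_eq_of_inStrip {α : V} {d : ℤ} {S : Set (Module.Dual ℚ V)} (hS : InStrip α d S) :
    upIdx α S = d + 1 := by
  refine IsLeast.csInf_eq ⟨fun v hv => ?_, fun m hm => ?_⟩
  · simpa [Hm] using (hS.2 v hv).2
  · obtain ⟨v, hv⟩ := hS.1
    have : d < m := by exact_mod_cast (hS.2 v hv).1.trans (hm hv)
    omega

lemma downIdx_eq_of_inStrip {α : V} {d : ℤ} {S : Set (Module.Dual ℚ V)} (hS : InStrip α d S) :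
    downIdx α S = d := by
  refine IsGreatest.csSup_eq ⟨fun v hv => (hS.2 v hv).1, fun m hm => ?_⟩
  obtain ⟨v, hv⟩ := hS.1
  have : m < d + 1 := by exact_mod_cast (hm hv).trans (hS.2 v hv).2
  omega

lemma up_eq_image_of_inStrip {α : V} {d : ℤ} {S : Set (Module.Dual ℚ V)} (hS : InStrip α d S) :
    up P α S = sAff α (P.coroot α) (d + 1) '' S := by
  rw [up, upIdx_eq_of_inStrip hS]

lemma down_eq_image_of_inStrip {α : V} {d : ℤ} {S : Set (Module.Dual ℚ V)}
    (hS : InStrip α d S) : down P α S = sAff α (P.coroot α) d '' S := by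
  rw [down, downIdx_eq_of_inStrip hS]

lemma inStrip_up {α : V} (hα : α ∈ P.R) {d : ℤ} {S : Set (Module.Dual ℚ V)}
    (hS : InStrip α d S) : InStrip α (d + 1) (up P α S) := by
  rw [up_eq_image_of_inStrip hS]
  convert inStrip_image_sAff hα hS (d + 1) using 1
  ring

lemma inStrip_down {α : V} (hα : α ∈ P.R) {d : ℤ} {S : Set (Module.Dual ℚ V)}
    (hS : InStrip α d S) : InStrip α (d - 1) (down P α S) := by
  rw [down_eq_image_of_inStrip hS]
  convert inStrip_image_sAff hα hS d using 1
  ring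

lemma inStrip_iterate_up {α : V} (hα : α ∈ P.R) {d : ℤ} {S : Set (Module.Dual ℚ V)}
    (hS : InStrip α d S) (n : ℕ) : InStrip α (d + n) ((up P α)^[n] S) := by
  induction n with
  | zero => simpa using hS
  | succ n ih =>
    rw [Function.iterate_succ_apply']
    convert inStrip_up hα ih using 1
    push_cast; ring

lemma inStrip_iterate_down {α : V} (hα : α ∈ P.R) {d : ℤ} {S : Set (Module.Dual ℚ V)}
    (hS : InStrip α d S) (n : ℕ) : InStrip α (d - n) ((down P α)^[n] S) := by
  induction n with
  | zero => simpa using hS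
  | succ n ih =>
    rw [Function.iterate_succ_apply']
    convert inStrip_down hα ih using 1
    push_cast; ring

lemma down_up_of_inStrip {α : V} (hα : α ∈ P.R) {d : ℤ} {S : Set (Module.Dual ℚ V)}
    (hS : InStrip α d S) : down P α (up P α S) = S := by
  rw [down_eq_image_of_inStrip (inStrip_up hα hS), up_eq_image_of_inStrip hS]
  exact Function.LeftInverse.image_image (sAff_sAff hα _) S

lemma inStrip_of_mem_finAlc {α : V} (hα : α ∈ P.Rpos) {S : Set (Module.Dual ℚ V)}
    (hS : S ∈ finAlc P) : InStrip α (-1) S ∨ InStrip α 0 S := by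
  obtain ⟨w, hw, rfl⟩ := hS
  have hne : (dualAct w '' Ae P).Nonempty := (Ae_nonempty P).image _
  rcases P.pos_or_neg _ (P.Weyl_symm_apply_mem hw (P.pos_subset hα)) with ⟨hpos, -⟩ | ⟨hpos, -⟩
  · refine .inr ⟨hne, fun v hv => ?_⟩
    simpa using (mem_dualAct_image_Ae_iff P).mp hv _ hpos
  · refine .inl ⟨hne, fun v hv => ?_⟩
    have := (mem_dualAct_image_Ae_iff P).mp hv _ hpos
    simp only [map_neg, LinearEquiv.apply_symm_apply] at this
    push_cast
    constructor <;> linarith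

lemma InStrip.eq_neg_one_or_eq_zero {α : V} (hα : α ∈ P.Rpos) {d : ℤ}
    {S : Set (Module.Dual ℚ V)} (hS : InStrip α d S) (hfin : S ∈ finAlc P) : d = -1 ∨ d = 0 :=
  (inStrip_of_mem_finAlc hα hfin).imp hS.eq hS.eq

lemma image_sAff_zero_mem_finAlc {α : V} (hα : α ∈ P.Rpos) {S : Set (Module.Dual ℚ V)}
    (hS : S ∈ finAlc P) : sAff α (P.coroot α) 0 '' S ∈ finAlc P := by
  obtain ⟨w, hw, rfl⟩ := hS
  obtain ⟨u, hu, hu_eq⟩ := P.exists_mem_Weyl_eq_reflection hα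
  have hs := sAff_sAff (P.pos_subset hα) 0
  refine ⟨u * w, mul_mem hu hw, ?_⟩
  ext v
  rw [Set.image_eq_preimage_of_inverse hs hs, Set.mem_preimage, mem_dualAct_image_Ae_iff,
    mem_dualAct_image_Ae_iff]
  refine forall₂_congr fun γ hγ => ?_
  have : sAff α (P.coroot α) 0 v (w γ) = v ((u * w) γ) := by
    rw [LinearEquiv.mul_apply, hu_eq _ (P.Weyl_apply_mem hw (P.pos_subset hγ)), P.reflection_apply]
    simp only [sAff, Int.cast_zero, sub_zero, LinearMap.sub_apply, LinearMap.smul_apply,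
      smul_eq_mul, map_sub, map_smul]
    ring
  rw [this]

lemma exists_iterate_of_mem_finAlc_inter_Astring {α : V} (hα : α ∈ P.Rpos) {d : ℤ}
    {S T : Set (Module.Dual ℚ V)} (hS : InStrip α d S) (hT : T ∈ finAlc P ∩ Astring P α S) :
    ∃ n : ℕ, (T = (up P α)^[n] S ∧ (d + n = -1 ∨ d + n = 0)) ∨
      (T = (down P α)^[n] S ∧ (d - n = -1 ∨ d - n = 0)) := by
  have hαR := P.pos_subset hα
  obtain ⟨hfin, n, rfl | rfl⟩ := hT
  · exact ⟨n, .inl ⟨rfl, (inStrip_iterate_up hαR hS n).eq_neg_one_or_eq_zero hα hfin⟩⟩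
  · exact ⟨n, .inr ⟨rfl, (inStrip_iterate_down hαR hS n).eq_neg_one_or_eq_zero hα hfin⟩⟩

lemma inStrip_of_mem_Aminus {α : V} (hα : α ∈ P.Rpos) {A : Set (Module.Dual ℚ V)}
    (hA : A ∈ Aminus P α) : InStrip α (-1) A := by
  refine (inStrip_of_mem_finAlc hα hA.1).resolve_right fun h => ?_
  obtain ⟨v, hv⟩ := h.1
  have h₁ : v α < 0 := by simpa [Hm] using hA.2 hv
  have h₂ := (h.2 v hv).1
  push_cast at h₂
  linarith

lemma up_mem_finAlc_of_mem_Aminus {α : V} (hα : α ∈ P.Rpos) {A : Set (Module.Dual ℚ V)}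
    (hA : A ∈ Aminus P α) : up P α A ∈ finAlc P := by
  rw [up_eq_image_of_inStrip (inStrip_of_mem_Aminus hα hA)]
  exact image_sAff_zero_mem_finAlc hα hA.1

theorem finAlc_inter_Astring_of_mem_Aminus {α : V} (hα : α ∈ P.Rpos)
    {A : Set (Module.Dual ℚ V)} (hA : A ∈ Aminus P α) :
    finAlc P ∩ Astring P α A = {A, up P α A} := by
  have hS := inStrip_of_mem_Aminus hα hA
  refine Set.Subset.antisymm (fun T hT => ?_) ?_
  · obtain ⟨n, ⟨rfl, hn⟩ | ⟨rfl, hn⟩⟩ := exists_iterate_of_mem_finAlc_inter_Astring hα hS hT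
    · obtain rfl | rfl : n = 0 ∨ n = 1 := by omega
      exacts [.inl rfl, .inr rfl]
    · obtain rfl : n = 0 := by omega
      exact .inl rfl
  · rw [Set.insert_subset_iff, Set.singleton_subset_iff]
    exact ⟨⟨hA.1, 0, .inl rfl⟩, ⟨up_mem_finAlc_of_mem_Aminus hα hA, 1, .inl rfl⟩⟩

theorem finAlc_inter_Astring_of_mem_image_up {α : V} (hα : α ∈ P.Rpos)
    {A : Set (Module.Dual ℚ V)} (hA : A ∈ up P α '' Aminus P α) :
    finAlc P ∩ Astring P α A = {down P α A, A} := by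
  obtain ⟨B, hB, rfl⟩ := hA
  have hBS := inStrip_of_mem_Aminus hα hB
  have hS : InStrip α 0 (up P α B) := inStrip_up (P.pos_subset hα) hBS
  refine Set.Subset.antisymm (fun T hT => ?_) ?_
  · obtain ⟨n, ⟨rfl, hn⟩ | ⟨rfl, hn⟩⟩ := exists_iterate_of_mem_finAlc_inter_Astring hα hS hT
    · obtain rfl : n = 0 := by omega
      exact .inr rfl
    · obtain rfl | rfl : n = 0 ∨ n = 1 := by omega
      exacts [.inr rfl, .inl rfl]
  · rw [Set.insert_subset_iff, Set.singleton_subset_iff, down_up_of_inStrip (P.pos_subset hα) hBS]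
    exact ⟨⟨hB.1, 1, .inr (down_up_of_inStrip (P.pos_subset hα) hBS).symm⟩,
      ⟨up_mem_finAlc_of_mem_Aminus hα hB, 0, .inl rfl⟩⟩

lemma mem_Aminus_or_mem_image_up {α : V} (hα : α ∈ P.Rpos) {A : Set (Module.Dual ℚ V)}
    (hA : A ∈ finAlc P) : A ∈ Aminus P α ∨ A ∈ up P α '' Aminus P α := by
  have hαR := P.pos_subset hα
  rcases inStrip_of_mem_finAlc hα hA with h | h
  · exact .inl ⟨hA, fun v hv => by simpa [Hm] using (h.2 v hv).2⟩
  · set B := sAff α (P.coroot α) 0 '' A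
    have hB : InStrip α (-1) B := by simpa using inStrip_image_sAff hαR h 0
    refine .inr ⟨B, ⟨image_sAff_zero_mem_finAlc hα hA, fun v hv => ?_⟩, ?_⟩
    · simpa [Hm] using (hB.2 v hv).2
    · rw [up_eq_image_of_inStrip hB]
      exact Function.LeftInverse.image_image (sAff_sAff hαR _) A

end Alcoves

/-- each `α`-string meets the set of finite Weyl group alcoves in
exactly two consecutive alcoves: `{A, α↑A}` if `A ∈ 𝒜⁻_α`, `{α↓A, A}` if `A ∈ 𝒜⁺_α`. -/
theorem stmt18 {V : Type*} [AddCommGroup V] [Module ℚ V] (P : RootSystemData V)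
    (α : V) (hα : α ∈ P.Rpos) (A : Set (Module.Dual ℚ V)) :
    (A ∈ Aminus P α → finAlc P ∩ Astring P α A = {A, up P α A}) ∧
    (A ∈ (up P α) '' Aminus P α → finAlc P ∩ Astring P α A = {down P α A, A}) ∧
    (A ∈ finAlc P → ∃ B ∈ finAlc P, finAlc P ∩ Astring P α A = {B, up P α B}) := by
  refine ⟨finAlc_inter_Astring_of_mem_Aminus hα, finAlc_inter_Astring_of_mem_image_up hα,
    fun hA => ?_⟩
  rcases mem_Aminus_or_mem_image_up hα hA with hA' | ⟨B, hB, rfl⟩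
  · exact ⟨A, hA, finAlc_inter_Astring_of_mem_Aminus hα hA'⟩
  · refine ⟨B, hB.1, ?_⟩
    rw [finAlc_inter_Astring_of_mem_image_up hα ⟨B, hB, rfl⟩,
      down_up_of_inStrip (P.pos_subset hα) (inStrip_of_mem_Aminus hα hB)]
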